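/- Let N ≥ 2 and let t_1⋯t_p be an admissible block with generalized Thue–Morse sequence (θ_i). If 1 ≤ i ≤ p and the i-th cyclic rotation satisfies (N−1−t_i)⋯(N−1−t_p)(N−1−t_1)⋯(N−1−t_{i-1}) = t_1⋯t_p^+ as blocks, then a contradiction follows; i.e., for every 1 ≤ i ≤ p, the reflection of the i-th cyclic rotation of t_1⋯t_p is strictly less than t_1⋯t_p^+ in lexicographic order. -/

import Mathlib

/-- Reflection of a block: each digit `c` becomes `N - 1 - c`. -/
def reflB (N : ℕ) (w : List ℕ) : List ℕ := w.map (fun c => N - 1 - c)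

/-- The block `w` with its last digit incremented by one. -/
def plusB (w : List ℕ) : List ℕ := w.dropLast ++ [w.getLast! + 1]

/-- The `i`-th cyclic rotation of the block `w` (0-indexed). -/
def rotB (w : List ℕ) (i : ℕ) : List ℕ := w.drop i ++ w.take i

/-- The lexicographic inequalities defining admissibility of a block. -/
def AdmissibleIneq (N : ℕ) (w : List ℕ) : Prop :=
  ∀ i < w.length,
    reflB N w ≤ rotB w i ∧ plusB (w.drop i) ++ reflB N (w.take i) ≤ plusB w

/-- An admissible block in `{0, …, N-1}`. -/
def Admissible (N : ℕ) (w : List ℕ) : Prop :=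
  w ≠ [] ∧ (∀ c ∈ w, c < N) ∧ w.getLast! < N - 1 ∧ AdmissibleIneq N w

/-- Prefixes of the generalized Thue–Morse sequence generated by `plusB w`:
`gtmBlock N w n` is the prefix `θ_1 ⋯ θ_{2^n p}`. -/
def gtmBlock (N : ℕ) (w : List ℕ) : ℕ → List ℕ
  | 0 => plusB w
  | n + 1 => gtmBlock N w n ++ plusB (reflB N (gtmBlock N w n))

/-- The generalized Thue–Morse sequence generated by `plusB w`, 0-indexed:
`gtm N w n = θ_{n+1}`. -/
def gtm (N : ℕ) (w : List ℕ) : ℕ → ℕ := fun n => (gtmBlock N w n).getD n 0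

/-- Strict lexicographic order on infinite sequences of digits. -/
def seqLt (a b : ℕ → ℕ) : Prop := ∃ n, (∀ k < n, a k = b k) ∧ a n < b n

/-- Lexicographic order on infinite sequences of digits. -/
def seqLe (a b : ℕ → ℕ) : Prop := seqLt a b ∨ a = b

/-- Shift of a sequence by `k` places. -/
def shift (a : ℕ → ℕ) (k : ℕ) : ℕ → ℕ := fun n => a (n + k)

/-- The periodic sequence `w^∞` obtained by repeating the block `w`. -/
def per (w : List ℕ) : ℕ → ℕ := fun n => w.getD (n % w.length) 0

/-- Reflection of an infinite sequence. -/
def reflSeq (N : ℕ) (a : ℕ → ℕ) : ℕ → ℕ := fun n => N - 1 - a n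

/-- The classical Thue–Morse sequence: parity of the binary digit sum. -/
def tm (i : ℕ) : ℕ := (Nat.digits 2 i).sum % 2

/-- Number of length-`n` words appearing in sequences of `Z`. -/
noncomputable def wordCount (Z : Set (ℕ → ℕ)) (n : ℕ) : ℕ :=
  Set.ncard { u : List ℕ | u.length = n ∧ ∃ d ∈ Z, ∀ k < n, u.getD k 0 = d k }

/-- `Z` has topological entropy `h`. -/
def hasEntropy (Z : Set (ℕ → ℕ)) (h : ℝ) : Prop :=
  Filter.Tendsto (fun n : ℕ => Real.log (wordCount Z n) / n) Filter.atTop (nhds h)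

/-!
On blocks of the same length with digits in `{0, …, N-1}`, reflection is an order-reversing
involution for the lexicographic order. Hence the admissibility inequality
`reflB N w ≤ rotB w i` reflects to `reflB N (rotB w i) ≤ w`, and `w < w⁺`.
-/

open List

section Reflection

variable {N : ℕ}

@[simp]
lemma length_reflB (w : List ℕ) : (reflB N w).length = w.length := length_map _

lemma reflB_reflB {w : List ℕ} (hw : ∀ c ∈ w, c < N) : reflB N (reflB N w) = w := by
  rw [reflB, reflB, map_map]
  conv_rhs => rw [← map_id w]
  refine map_congr_left fun c hc => ?_
  have := hw c hc
  simp only [Function.comp_apply, id]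
  omega

lemma reflB_lt_reflB {u v : List ℕ} (hlen : u.length = v.length) (hv : ∀ c ∈ v, c < N)
    (h : u < v) : reflB N v < reflB N u := by
  induction h with
  | nil => simp at hlen
  | cons h ih =>
    exact Lex.cons (ih (by simpa using hlen) fun c hc => hv c (mem_cons_of_mem _ hc))
  | @rel x _ y _ hxy =>
    have hy : y < N := hv y mem_cons_self
    exact Lex.rel (show N - 1 - y < N - 1 - x by omega)

lemma reflB_le_of_reflB_le {v w : List ℕ} (hlen : w.length = v.length)
    (hv : ∀ c ∈ v, c < N) (hw : ∀ c ∈ w, c < N) (h : reflB N w ≤ v) : reflB N v ≤ w := by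
  rcases h.lt_or_eq with hlt | rfl
  · simpa only [reflB_reflB hw] using (reflB_lt_reflB (by simpa using hlen) hv hlt).le
  · rw [reflB_reflB hw]

lemma rotB_perm (w : List ℕ) (i : ℕ) : rotB w i ~ w :=
  perm_append_comm.trans (by rw [take_append_drop])

lemma lt_plusB {w : List ℕ} (hw : w ≠ []) : w < plusB w := by
  rw [plusB, getLast!_eq_getLast?_getD, getLast?_eq_some_getLast hw, Option.getD_some]
  conv_lhs => rw [← dropLast_append_getLast hw]
  exact append_left_lt (Lex.rel (Nat.lt_succ_self _))

end Reflection

theorem stmt19_general (N : ℕ) (w : List ℕ) (hadm : Admissible N w) :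
    ∀ i < w.length, reflB N (rotB w i) < plusB w := by
  intro i hi
  obtain ⟨hne, hdigits, -, hineq⟩ := hadm
  have hrot := rotB_perm w i
  calc reflB N (rotB w i)
      ≤ w := reflB_le_of_reflB_le hrot.length_eq.symm
          (fun c hc => hdigits c (hrot.mem_iff.mp hc)) hdigits (hineq i hi).1
    _ < plusB w := lt_plusB hne

/-- strictness claim from the proof of Proposition 4.2 — for an
admissible block, the reflection of each cyclic rotation of `t_1⋯t_p` is
strictly smaller than `t_1⋯t_p^+`. -/
theorem stmt19 (N : ℕ) (hN : 2 ≤ N) (w : List ℕ) (hadm : Admissible N w) :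
    ∀ i < w.length, reflB N (rotB w i) < plusB w :=
  stmt19_general N w hadm
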